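/- Let X be a finite discrete space with at least two elements, Γ a nonempty set, and φ : Γ → Γ. Then (X^Γ, σ_φ) has the uniform stroboscopical property if and only if φ is one-to-one. -/
import Mathlib


open Filter

/-- The generalized shift `σ_φ` on `X^Γ`. -/
def genShift {X Γ : Type*} (φ : Γ → Γ) (x : Γ → X) : Γ → X := fun γ => x (φ γ)

/-- The basic entourage `α_H` of agreement on `H ⊆ Γ`. -/
def agreeEnt (X : Type*) {Γ : Type*} (H : Set Γ) : Set ((Γ → X) × (Γ → X)) :=
  {p | ∀ γ ∈ H, p.1 γ = p.2 γ}

/-- Membership in the unique compatible uniform structure `𝒰` on `X^Γ`: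
`D` contains some `α_H` with `H ⊆ Γ` finite. -/
def IsProdEntourage (X : Type*) {Γ : Type*} (D : Set ((Γ → X) × (Γ → X))) : Prop :=
  ∃ H : Set Γ, H.Finite ∧ agreeEnt X H ⊆ D

/-- `ω_f(A, x)`: limits of convergent subsequences of `(f^[A i] x)_i`. -/
def omegaLimitSet {Z : Type*} [TopologicalSpace Z] (f : Z → Z) (A : ℕ → ℕ) (x : Z) : Set Z :=
  {y | ∃ k : ℕ → ℕ, StrictMono k ∧ Tendsto (fun i => f^[A (k i)] x) atTop (nhds y)}

/-- The stroboscopical property of a dynamical system `(Z, f)`. -/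
def Strob {Z : Type*} [TopologicalSpace Z] (f : Z → Z) : Prop :=
  ∀ z : Z, ∀ A : ℕ → ℕ, StrictMono A → ∃ x : Z, z ∈ omegaLimitSet f A x

/-- The uniform stroboscopical property of `(X^Γ, σ_φ)`: every strictly increasing
sequence `A` has a subsequence `(A (k i))` for which there is `ϱ` with
`σ_φ^[A (k i)] ∘ ϱ → id` uniformly. -/
def UnifStrobShift {X Γ : Type*} (φ : Γ → Γ) : Prop :=
  ∀ A : ℕ → ℕ, StrictMono A → ∃ k : ℕ → ℕ, StrictMono k ∧
    ∃ ρ : (Γ → X) → (Γ → X),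
      ∀ D : Set ((Γ → X) × (Γ → X)), IsProdEntourage X D →
        ∃ N : ℕ, ∀ i, N ≤ i → ∀ z : Γ → X, (z, (genShift φ)^[A (k i)] (ρ z)) ∈ D

lemma genShift_iterate {X Γ : Type*} (φ : Γ → Γ) (n : ℕ) (x : Γ → X) (γ : Γ) :
    ((genShift φ)^[n] x) γ = x (φ^[n] γ) := by
  induction n generalizing x with
  | zero => rfl
  | succ n ih =>
    rw [Function.iterate_succ_apply, ih, Function.iterate_succ_apply']
    rfl

section OrbitAux

variable {Γ : Type*} (φ : Γ → Γ)

/-- same-grand-orbit relation -/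
def orbRel : Setoid Γ where
  r γ γ' := ∃ a b : ℕ, φ^[a] γ = φ^[b] γ'
  iseqv := by
    constructor
    · exact fun γ => ⟨0, 0, rfl⟩
    · rintro γ γ' ⟨a, b, h⟩; exact ⟨b, a, h.symm⟩
    · rintro γ γ' γ'' ⟨a, b, h⟩ ⟨a', b', h'⟩
      refine ⟨a' + a, b + b', ?_⟩
      rw [Function.iterate_add_apply, Function.iterate_add_apply, h, ← Function.iterate_add_apply,
        ← Function.iterate_add_apply, Nat.add_comm a' b, Function.iterate_add_apply,
        Function.iterate_add_apply, h']

noncomputable def orep (γ : Γ) : Γ := (Quotient.mk (orbRel φ) γ).out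

lemma orep_spec (γ : Γ) : ∃ a b : ℕ, φ^[a] γ = φ^[b] (orep φ γ) :=
  (orbRel φ).symm (Quotient.mk_out (s := orbRel φ) γ)

lemma orep_eq {γ γ' : Γ} (h : ∃ a b : ℕ, φ^[a] γ = φ^[b] γ') : orep φ γ = orep φ γ' :=
  congrArg Quotient.out (Quotient.sound (s := orbRel φ) h)

noncomputable def aIdx (γ : Γ) : ℕ := (orep_spec φ γ).choose
noncomputable def bIdx (γ : Γ) : ℕ := (orep_spec φ γ).choose_spec.choose

lemma ab_spec (γ : Γ) : φ^[aIdx φ γ] γ = φ^[bIdx φ γ] (orep φ γ) :=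
  (orep_spec φ γ).choose_spec.choose_spec

/-- threshold function -/
noncomputable def Nbd (γ : Γ) : ℕ :=
  Function.minimalPeriod φ γ + 2 * aIdx φ γ + 2 * bIdx φ γ

variable {φ}

lemma periodic_iterate_iff (hφ : Function.Injective φ) (d : ℕ) (γ : Γ) :
    φ^[d] γ ∈ Function.periodicPts φ ↔ γ ∈ Function.periodicPts φ := by
  constructor
  · rintro ⟨n, hn, hper⟩
    refine ⟨n, hn, ?_⟩
    have h1 : φ^[d] (φ^[n] γ) = φ^[d] γ := by
      rw [← Function.iterate_add_apply, Nat.add_comm, Function.iterate_add_apply]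
      exact hper
    exact hφ.iterate d h1
  · rintro ⟨n, hn, hper⟩
    refine ⟨n, hn, ?_⟩
    show φ^[n] (φ^[d] γ) = φ^[d] γ
    rw [← Function.iterate_add_apply, Nat.add_comm, Function.iterate_add_apply, hper]

lemma iter_inj_of_not_periodic (hφ : Function.Injective φ) {r : Γ}
    (hr : r ∉ Function.periodicPts φ) {s t : ℕ} (h : φ^[s] r = φ^[t] r) : s = t := by
  rcases Nat.le_total s t with hst | hst
  · by_contra hne
    have h1 : φ^[s] (φ^[t - s] r) = φ^[s] r := by
      rw [← Function.iterate_add_apply, Nat.add_comm, Nat.sub_add_cancel hst]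
      exact h.symm
    exact hr ⟨t - s, by omega, hφ.iterate s h1⟩
  · by_contra hne
    have h1 : φ^[t] (φ^[s - t] r) = φ^[t] r := by
      rw [← Function.iterate_add_apply, Nat.add_comm, Nat.sub_add_cancel hst]
      exact h
    exact hr ⟨s - t, by omega, hφ.iterate t h1⟩

lemma iterate_comm_apply (φ : Γ → Γ) (s t : ℕ) (x : Γ) :
    φ^[s] (φ^[t] x) = φ^[t] (φ^[s] x) := by
  rw [← Function.iterate_add_apply, ← Function.iterate_add_apply, Nat.add_comm]

/-- key collision lemma, asymmetric version. -/
lemma key_lt (hφ : Function.Injective φ) {m : ℕ → ℕ} (hm : StrictMono m)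
    (hgap : ∀ j, m j + j + 2 ≤ m (j + 1))
    (hres : ∀ p i j, 1 ≤ p → p ≤ i → p ≤ j → m i % p = m j % p)
    {i j : ℕ} {γ γ' : Γ} (hi : Nbd φ γ ≤ i) (hj : Nbd φ γ' ≤ j) (hij : i < j)
    (hE : φ^[m i] γ = φ^[m j] γ') : γ = γ' := by
  by_cases hper : γ' ∈ Function.periodicPts φ
  · -- periodic case
    have hmij : m i < m j := hm hij
    have hd : φ^[m i] γ = φ^[m i] (φ^[m j - m i] γ') := by
      rw [← Function.iterate_add_apply, Nat.add_comm, Nat.sub_add_cancel hmij.le]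
      exact hE
    have hγd : γ = φ^[m j - m i] γ' := hφ.iterate (m i) hd
    have hppos : 0 < Function.minimalPeriod φ γ' :=
      Function.minimalPeriod_pos_of_mem_periodicPts hper
    have hpγ : Function.minimalPeriod φ γ = Function.minimalPeriod φ γ' := by
      rw [hγd]; exact Function.minimalPeriod_apply_iterate hper _
    have hip : Function.minimalPeriod φ γ' ≤ i := by
      have h0 := hi; unfold Nbd at h0; omega
    have hjp : Function.minimalPeriod φ γ' ≤ j := by
      have h0 := hj; unfold Nbd at h0; omega
    have hmod := hres (Function.minimalPeriod φ γ') i j hppos hip hjp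
    obtain ⟨t, ht⟩ := (Nat.modEq_iff_dvd' hmij.le).mp hmod
    have hfix : φ^[m j - m i] γ' = γ' := by
      rw [ht]
      exact (Function.isPeriodicPt_minimalPeriod φ γ').mul_const t
    rw [hγd, hfix]
  · -- nonperiodic case : derive a contradiction
    exfalso
    have hγper : γ ∉ Function.periodicPts φ := by
      intro hc
      apply hper
      have h1 : φ^[m i] γ ∈ Function.periodicPts φ := (periodic_iterate_iff hφ _ _).mpr hc
      rw [hE] at h1
      exact (periodic_iterate_iff hφ _ _).mp h1
    have hrep : orep φ γ = orep φ γ' := orep_eq φ ⟨m i, m j, hE⟩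
    have hrper : orep φ γ ∉ Function.periodicPts φ := by
      intro hc
      apply hγper
      have h1 : φ^[bIdx φ γ] (orep φ γ) ∈ Function.periodicPts φ :=
        (periodic_iterate_iff hφ _ _).mpr hc
      rw [← ab_spec φ γ] at h1
      exact (periodic_iterate_iff hφ _ _).mp h1
    have hL : φ^[aIdx φ γ' + (m i + bIdx φ γ)] (orep φ γ)
        = φ^[aIdx φ γ + (m j + bIdx φ γ')] (orep φ γ) := by
      calc φ^[aIdx φ γ' + (m i + bIdx φ γ)] (orep φ γ)
          = φ^[aIdx φ γ'] (φ^[m i] (φ^[bIdx φ γ] (orep φ γ))) := by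
            rw [Function.iterate_add_apply, Function.iterate_add_apply]
        _ = φ^[aIdx φ γ'] (φ^[m i] (φ^[aIdx φ γ] γ)) := by rw [← ab_spec φ γ]
        _ = φ^[aIdx φ γ'] (φ^[aIdx φ γ] (φ^[m i] γ)) :=
            congrArg _ (iterate_comm_apply φ (m i) (aIdx φ γ) γ)
        _ = φ^[aIdx φ γ'] (φ^[aIdx φ γ] (φ^[m j] γ')) := by rw [hE]
        _ = φ^[aIdx φ γ] (φ^[aIdx φ γ'] (φ^[m j] γ')) :=
            iterate_comm_apply φ (aIdx φ γ') (aIdx φ γ) _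
        _ = φ^[aIdx φ γ] (φ^[m j] (φ^[aIdx φ γ'] γ')) :=
            congrArg _ (iterate_comm_apply φ (aIdx φ γ') (m j) γ')
        _ = φ^[aIdx φ γ] (φ^[m j] (φ^[bIdx φ γ'] (orep φ γ'))) := by rw [ab_spec φ γ']
        _ = φ^[aIdx φ γ] (φ^[m j] (φ^[bIdx φ γ'] (orep φ γ))) := by rw [hrep]
        _ = φ^[aIdx φ γ + (m j + bIdx φ γ')] (orep φ γ) := by
            rw [Function.iterate_add_apply, Function.iterate_add_apply]
    have heq : aIdx φ γ' + (m i + bIdx φ γ) = aIdx φ γ + (m j + bIdx φ γ') :=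
      iter_inj_of_not_periodic hφ hrper hL
    -- gap estimate : m i + j + 1 ≤ m j
    have hgap' : m i + j + 1 ≤ m j := by
      have h1 : m i ≤ m (j - 1) := hm.monotone (by omega)
      have h2 := hgap (j - 1)
      have h3 : j - 1 + 1 = j := by omega
      rw [h3] at h2
      omega
    unfold Nbd at hi hj
    omega

lemma key (hφ : Function.Injective φ) {m : ℕ → ℕ} (hm : StrictMono m)
    (hgap : ∀ j, m j + j + 2 ≤ m (j + 1))
    (hres : ∀ p i j, 1 ≤ p → p ≤ i → p ≤ j → m i % p = m j % p)
    {i j : ℕ} {γ γ' : Γ} (hi : Nbd φ γ ≤ i) (hj : Nbd φ γ' ≤ j)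
    (hE : φ^[m i] γ = φ^[m j] γ') : γ = γ' := by
  rcases lt_trichotomy i j with h | h | h
  · exact key_lt hφ hm hgap hres hi hj h hE
  · subst h
    exact hφ.iterate (m i) hE
  · exact (key_lt hφ hm hgap hres hj hi h hE.symm).symm

end OrbitAux

/-- extraction of a subsequence with large gaps and stabilized residues. -/
lemma exists_subseq (A : ℕ → ℕ) (hA : StrictMono A) :
    ∃ k : ℕ → ℕ, StrictMono k ∧ (∀ j, A (k j) + j + 2 ≤ A (k (j + 1))) ∧
      (∀ p i j, 1 ≤ p → p ≤ i → p ≤ j → A (k i) % p = A (k j) % p) := by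
  classical
  set U : Ultrafilter ℕ := Filter.hyperfilter ℕ with hU
  have hcof : ∀ s : Set ℕ, s ∈ Filter.cofinite → s ∈ U := fun s hs =>
    Filter.hyperfilter_le_cofinite hs
  -- residues
  have hα : ∀ p : ℕ, ∃ r : ℕ, 1 ≤ p → {n : ℕ | A n % p = r} ∈ U := by
    intro p
    rcases Nat.eq_zero_or_pos p with hp | hp
    · exact ⟨0, by omega⟩
    have hcover : (⋃ r ∈ Set.Iio p, {n : ℕ | A n % p = r}) ∈ U := by
      have : (⋃ r ∈ Set.Iio p, {n : ℕ | A n % p = r}) = Set.univ := by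
        ext n
        simp only [Set.mem_iUnion, Set.mem_setOf_eq, Set.mem_univ, iff_true, Set.mem_Iio]
        exact ⟨A n % p, Nat.mod_lt _ hp, rfl⟩
      rw [this]
      exact Filter.univ_mem
    obtain ⟨r, _, hr⟩ :=
      (Ultrafilter.finite_biUnion_mem_iff (Set.finite_Iio p)).mp hcover
    exact ⟨r, fun _ => hr⟩
  choose α hαs using hα
  -- the good tail sets
  have hT : ∀ c i : ℕ, ∃ n : ℕ, c < n ∧ A c + i + 2 ≤ A n ∧
      (∀ p, 1 ≤ p → p ≤ i → A n % p = α p) := by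
    intro c i
    have h1 : {n : ℕ | c < n} ∈ U := by
      apply hcof
      rw [Filter.mem_cofinite]
      exact Set.Finite.subset (Set.finite_Iic c) (fun n hn => by simpa using hn)
    have h2 : {n : ℕ | A c + i + 2 ≤ A n} ∈ U := by
      apply hcof
      rw [Filter.mem_cofinite]
      apply Set.Finite.subset (Set.finite_Iio (A c + i + 2))
      intro n hn
      simp only [Set.mem_compl_iff, Set.mem_setOf_eq, not_le] at hn
      simp only [Set.mem_Iio]
      exact lt_of_le_of_lt hA.le_apply hn
    have h3 : {n : ℕ | ∀ p, 1 ≤ p → p ≤ i → A n % p = α p} ∈ U := by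
      have : {n : ℕ | ∀ p, 1 ≤ p → p ≤ i → A n % p = α p}
          = ⋂ p ∈ Set.Icc 1 i, {n : ℕ | A n % p = α p} := by
        ext n; simp [Set.mem_Icc]
      rw [this]
      exact (Filter.biInter_mem (Set.finite_Icc 1 i)).mpr
        (fun p hp => hαs p (Set.mem_Icc.mp hp).1)
    have := Filter.inter_mem h1 (Filter.inter_mem h2 h3)
    obtain ⟨n, hn1, hn2, hn3⟩ := Ultrafilter.nonempty_of_mem this
    exact ⟨n, hn1, hn2, hn3⟩
  choose f hf1 hf2 hf3 using hT
  -- recursive definition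
  set k : ℕ → ℕ := fun i => Nat.rec 0 (fun i c => f c (i + 1)) i with hk
  have hksucc : ∀ i, k (i + 1) = f (k i) (i + 1) := fun i => rfl
  have hkmono : StrictMono k := strictMono_nat_of_lt_succ fun i => by
    rw [hksucc]; exact hf1 (k i) (i + 1)
  have hres' : ∀ i p, 1 ≤ p → p ≤ i → A (k i) % p = α p := by
    intro i p hp1 hpi
    obtain ⟨i', rfl⟩ : ∃ i', i = i' + 1 := ⟨i - 1, by omega⟩
    rw [hksucc]
    exact hf3 (k i') (i' + 1) p hp1 hpi
  refine ⟨k, hkmono, ?_, ?_⟩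
  · intro j
    rw [hksucc]
    have := hf2 (k j) (j + 1)
    omega
  · intro p i j hp hpi hpj
    rw [hres' i p hp hpi, hres' j p hp hpj]

/-- `(X^Γ, σ_φ)` has the uniform stroboscopical property iff `φ` is
one-to-one. -/
theorem stmt_12 {X Γ : Type*} [Fintype X] [Nontrivial X] [Nonempty Γ] (φ : Γ → Γ) :
    UnifStrobShift (X := X) φ ↔ Function.Injective φ := by
  classical
  constructor
  · -- uniform strob → injective
    intro hU a b hab
    by_contra hne
    obtain ⟨x, y, hxy⟩ := exists_pair_ne X
    obtain ⟨k, hk, ρ, hρ⟩ := hU id strictMono_id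
    obtain ⟨N, hN⟩ := hρ (agreeEnt X {a, b})
      ⟨{a, b}, (Set.finite_singleton b).insert a, subset_rfl⟩
    set z : Γ → X := fun γ => if γ = a then x else y with hz
    have h := hN (N + 1) (Nat.le_succ N) z
    have ha := h a (Set.mem_insert a {b})
    have hb := h b (Set.mem_insert_of_mem a rfl)
    simp only [genShift_iterate] at ha hb
    have hk1 : 1 ≤ k (N + 1) := le_trans (by omega) hk.le_apply
    have hiter : φ^[id (k (N + 1))] a = φ^[id (k (N + 1))] b := by
      obtain ⟨n, hn⟩ : ∃ n, k (N + 1) = n + 1 := ⟨k (N + 1) - 1, by omega⟩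
      simp only [id_eq, hn]
      rw [Function.iterate_succ_apply, Function.iterate_succ_apply, hab]
    have hza : z a = x := by simp [hz]
    have hzb : z b = y := by simp [hz, Ne.symm hne]
    apply hxy
    calc x = z a := hza.symm
      _ = ρ z (φ^[id (k (N + 1))] a) := ha
      _ = ρ z (φ^[id (k (N + 1))] b) := by rw [hiter]
      _ = z b := hb.symm
      _ = y := hzb
  · -- injective → uniform strob
    intro hφ A hA
    obtain ⟨k, hk, hgap, hres⟩ := exists_subseq A hA
    refine ⟨k, hk, ?_⟩
    set m : ℕ → ℕ := fun i => A (k i) with hm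
    have hmmono : StrictMono m := hA.comp hk
    refine ⟨fun z δ =>
      if h : ∃ q : ℕ × Γ, Nbd φ q.2 ≤ q.1 ∧ φ^[m q.1] q.2 = δ then z h.choose.2 else z δ, ?_⟩
    intro D hD
    obtain ⟨H, hHfin, hHD⟩ := hD
    refine ⟨hHfin.toFinset.sup (Nbd φ), fun i hi z => hHD ?_⟩
    intro γ hγ
    have hNi : Nbd φ γ ≤ i :=
      le_trans (Finset.le_sup (hHfin.mem_toFinset.mpr hγ)) hi
    show z γ = ((genShift φ)^[A (k i)] _) γ
    rw [genShift_iterate]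
    have hex : ∃ q : ℕ × Γ, Nbd φ q.2 ≤ q.1 ∧ φ^[m q.1] q.2 = φ^[m i] γ :=
      ⟨(i, γ), hNi, rfl⟩
    show z γ = if h : ∃ q : ℕ × Γ, Nbd φ q.2 ≤ q.1 ∧ φ^[m q.1] q.2 = φ^[m i] γ
      then z h.choose.2 else z (φ^[m i] γ)
    rw [dif_pos hex]
    obtain ⟨h1, h2⟩ := hex.choose_spec
    rw [key hφ hmmono hgap hres h1 hNi h2]
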